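/- arXiv:2207.09626 — 2 statements merged into one kernel-verified Lean document; each statement's English description precedes it below -/
import Mathlib

section
/- Let C be a category with all morphisms monic that admits a universal homogeneous ind-object Ω, and let X be an object of C. Then the coslice category X/C (objects: morphisms X → Y; morphisms: commuting triangles) also admits a universal homogeneous ind-object; specifically, for any embedding α : X → Ω_1, the ind-object (Ω_n, α_n) with α_n the composite of α and the transition maps is universal and f-injective in X/C. -/
open CategoryTheory

universe u v

/-- An ind-object of a category `C`: a sequential diagram `X₁ → X₂ → ⋯` in `C`. -/
structure IndObject (C : Type u) [Category.{v} C] where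
  obj : ℕ → C
  map : ∀ n : ℕ, obj n ⟶ obj (n + 1)

namespace IndObject

variable {C : Type u} [Category.{v} C]

/-- The transition morphism `obj n ⟶ obj m` of an ind-object, for `n ≤ m`. -/
def trans (Ω : IndObject C) : ∀ {n m : ℕ}, n ≤ m → (Ω.obj n ⟶ Ω.obj m) :=
  fun {n m} h =>
    Nat.leRecOn (C := fun m => Ω.obj n ⟶ Ω.obj m) h (fun {l} g => g ≫ Ω.map l) (𝟙 _)

/-- An ind-object is universal if every object of `C` embeds into it. -/
def Universal (Ω : IndObject C) : Prop :=
  ∀ X : C, ∃ n : ℕ, Nonempty (X ⟶ Ω.obj n)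

/-- An ind-object is f-injective if every embedding of an object of `C` into it extends
along any morphism of `C`. -/
def FInjective (Ω : IndObject C) : Prop :=
  ∀ ⦃X Y : C⦄ (α : X ⟶ Y) (n : ℕ) (γ : X ⟶ Ω.obj n),
    ∃ (m : ℕ) (h : n ≤ m) (β : Y ⟶ Ω.obj m), α ≫ β = γ ≫ Ω.trans h

end IndObject


theorem IndObject.trans_le_succ {C : Type u} [Category.{v} C] (Ω : IndObject C)
    {n m : ℕ} (h : n ≤ m) (h' : n ≤ m + 1) :
    Ω.trans h' = Ω.trans h ≫ Ω.map m := by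
  simp only [IndObject.trans]
  exact Nat.leRecOn_succ h _

/-- The ind-object of the coslice category `X/C` determined by a universal homogeneous
ind-object `Ω` of `C` and an embedding `α : X → Ω₁`. -/
def coslice {C : Type u} [Category.{v} C] (Ω : IndObject C) {X : C}
    (α : X ⟶ Ω.obj 0) : IndObject (CategoryTheory.Under X) where
  obj n := CategoryTheory.Under.mk (α ≫ Ω.trans (Nat.zero_le n))
  map n := CategoryTheory.Under.homMk (Ω.map n) (by
    simp only [CategoryTheory.Under.mk_hom, Category.assoc]
    rw [← Ω.trans_le_succ (Nat.zero_le n) (Nat.zero_le (n + 1))])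

/-!
Under the forgetful functor `X/C ⥤ C` the coslice ind-object becomes `Ω`, so both properties
are f-injectivity of `Ω`. An object `β : X ⟶ Y` of `X/C` embeds into `(Ω_m, α_m)` by extending
`α` along `β`. Given `f : (Y, β) ⟶ (Z, β')` and `γ : (Y, β) ⟶ (Ω_n, α_n)`, extending `γ` along `f`
in `C` yields `δ : Z ⟶ Ω_m`, and `δ` is automatically a morphism under `X` because
`β' ≫ δ = β ≫ f ≫ δ = β ≫ γ ≫ Ω.trans = α_n ≫ Ω.trans = α_m`.
-/

namespace IndObject

variable {C : Type u} [Category.{v} C] (Ω : IndObject C)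

theorem trans_self (n : ℕ) (h : n ≤ n) : Ω.trans h = 𝟙 _ := by
  simp only [IndObject.trans]
  exact Nat.leRecOn_self _

theorem trans_comp_trans {n m k : ℕ} (h₁ : n ≤ m) (h₂ : m ≤ k) (h₃ : n ≤ k) :
    Ω.trans h₁ ≫ Ω.trans h₂ = Ω.trans h₃ := by
  induction h₂ with
  | refl => rw [Ω.trans_self, Category.comp_id]
  | @step k h₂ ih =>
      rw [Ω.trans_le_succ h₂ (Nat.le_succ_of_le h₂),
        Ω.trans_le_succ (h₁.trans h₂) h₃, ← ih (h₁.trans h₂), Category.assoc]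

theorem comp_comp_eq_comp_trans {A Y Z : C} {k n m : ℕ} {hkn : k ≤ n} {hnm : n ≤ m}
    {hkm : k ≤ m} {a : A ⟶ Ω.obj k} {b : A ⟶ Y} {f : Y ⟶ Z} {g : Y ⟶ Ω.obj n}
    {δ : Z ⟶ Ω.obj m} (hg : b ≫ g = a ≫ Ω.trans hkn) (hδ : f ≫ δ = g ≫ Ω.trans hnm) :
    (b ≫ f) ≫ δ = a ≫ Ω.trans hkm := by
  rw [Category.assoc, hδ, ← Category.assoc, hg, Category.assoc, Ω.trans_comp_trans]

end IndObject

section Coslice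

variable {C : Type u} [Category.{v} C] (Ω : IndObject C) {X : C} (α : X ⟶ Ω.obj 0)

theorem coslice_trans_right {n m : ℕ} (h : n ≤ m) :
    ((coslice Ω α).trans h).right = Ω.trans h := by
  induction h with
  | refl => rw [(coslice Ω α).trans_self, Ω.trans_self]; rfl
  | @step k h ih =>
      rw [(coslice Ω α).trans_le_succ h (Nat.le_succ_of_le h),
        Ω.trans_le_succ h (Nat.le_succ_of_le h), Under.comp_right, ih]
      rfl

variable {Ω}

theorem coslice_universal (hfinj : Ω.FInjective) : (coslice Ω α).Universal := by
  intro Y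
  obtain ⟨m, _, β, hβ⟩ := hfinj Y.hom 0 α
  exact ⟨m, ⟨Under.homMk β hβ⟩⟩

theorem coslice_fInjective (hfinj : Ω.FInjective) : (coslice Ω α).FInjective := by
  intro Y Z f n γ
  obtain ⟨m, h, δ, hδ⟩ := hfinj f.right n γ.right
  have hδ_under : Z.hom ≫ δ = α ≫ Ω.trans (Nat.zero_le m) := by
    rw [← Under.w f]
    exact Ω.comp_comp_eq_comp_trans (Under.w γ) hδ
  refine ⟨m, h, Under.homMk δ hδ_under, ?_⟩
  ext
  simp only [Under.comp_right, coslice_trans_right]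
  exact hδ

end Coslice

theorem stmt_14_general (C : Type u) [Category.{v} C]
    (Ω : IndObject C) (hfinj : Ω.FInjective)
    (X : C) (α : X ⟶ Ω.obj 0) :
    (coslice Ω α).Universal ∧ (coslice Ω α).FInjective :=
  ⟨coslice_universal α hfinj, coslice_fInjective α hfinj⟩

/-- if `C` (all morphisms monic) has a universal homogeneous ind-object
`Ω`, then for any object `X` and any embedding `α : X → Ω₁` the induced ind-object of
the coslice category `X/C` is universal and f-injective (hence universal homogeneous);
in particular `X/C` admits a universal homogeneous ind-object. -/
theorem stmt_14 (C : Type u) [Category.{v} C]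
    (hmono : ∀ {A B : C} (f : A ⟶ B), Mono f)
    (Ω : IndObject C) (huniv : Ω.Universal) (hfinj : Ω.FInjective)
    (X : C) (α : X ⟶ Ω.obj 0) :
    (coslice Ω α).Universal ∧ (coslice Ω α).FInjective :=
  stmt_14_general C Ω hfinj X α
end

section
/- Let C be a category with all morphisms monic satisfying: countable cofinality, relative countable cofinality (for every object X there is a sequence of morphisms X → X(m), m ≥ 1, cofinal among morphisms out of X), the joint embedding property, and the amalgamation property (any span X ← W → Y completes to a commutative square with some object Z). Then C has an ind-object that is both universal and f-injective (hence universal and homogeneous). -/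
open CategoryTheory

universe u v

/-!
Build `X 0 ⟶ X 1 ⟶ ⋯` step by step. By relative countable cofinality each `X n` has a
countable family `X n ⟶ E (X n) m` through which every morphism out of `X n` factors, so it
suffices to make each member of these families factor through some later transition map.
The countably many pairs `(n, m)` are enumerated by `Nat.unpair`; at step `k` the pending
morphism for `Nat.unpair k`, pushed forward to `X k` by amalgamation, is taken as the next
transition map, and the `k`-th object of a cofinal sequence is joined in for universality.
Amalgamating a span `Y ← X ⟶ X n` then turns this absorption into f-injectivity.
-/

namespace IndObject

variable {C : Type u} [Category.{v} C] (Ω : IndObject C)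

lemma trans_refl {n : ℕ} (h : n ≤ n) : Ω.trans h = 𝟙 _ :=
  Nat.leRecOn_self _

lemma trans_succ {n k : ℕ} (h : n ≤ k) (h' : n ≤ k + 1) :
    Ω.trans h' = Ω.trans h ≫ Ω.map k :=
  Nat.leRecOn_succ h _

def Absorbs {n : ℕ} {Y : C} (f : Ω.obj n ⟶ Y) : Prop :=
  ∃ (k : ℕ) (h : n ≤ k) (δ : Y ⟶ Ω.obj k), f ≫ δ = Ω.trans h

variable {Ω}

lemma Absorbs.of_comp {n : ℕ} {Y Z : C} {f : Ω.obj n ⟶ Y} {g : Y ⟶ Z}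
    (hfg : Ω.Absorbs (f ≫ g)) : Ω.Absorbs f := by
  obtain ⟨k, h, δ, hδ⟩ := hfg
  exact ⟨k, h, g ≫ δ, by rw [← hδ, Category.assoc]⟩

lemma fInjective_of_forall_absorbs
    (hAP : ∀ ⦃W X Y : C⦄ (f : W ⟶ X) (g : W ⟶ Y),
      ∃ (Z : C) (h : X ⟶ Z) (i : Y ⟶ Z), f ≫ h = g ≫ i)
    (habs : ∀ (n : ℕ) (Y : C) (f : Ω.obj n ⟶ Y), Ω.Absorbs f) : Ω.FInjective := by
  intro X Y α n γ
  obtain ⟨Z, h, i, hhi⟩ := hAP α γ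
  obtain ⟨k, hk, δ, hδ⟩ := habs n Z i
  exact ⟨k, hk, h ≫ δ, by rw [← Category.assoc, hhi, Category.assoc, hδ]⟩

end IndObject

namespace Fraisse

/-- Choices witnessing countable cofinality (`cofinal`), relative countable cofinality
(`toExt`), amalgamation and joint embedding. -/
structure Data (C : Type u) [Category.{v} C] where
  cofinal : ℕ → C
  ext : C → ℕ → C
  toExt : ∀ (X : C) (m : ℕ), X ⟶ ext X m
  amalg : ∀ {W X Y : C}, (W ⟶ X) → (W ⟶ Y) → C
  amalgL : ∀ {W X Y : C} (f : W ⟶ X) (g : W ⟶ Y), X ⟶ amalg f g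
  amalgR : ∀ {W X Y : C} (f : W ⟶ X) (g : W ⟶ Y), Y ⟶ amalg f g
  amalg_comm : ∀ {W X Y : C} (f : W ⟶ X) (g : W ⟶ Y), f ≫ amalgL f g = g ≫ amalgR f g
  join : C → C → C
  joinL : ∀ X Y : C, X ⟶ join X Y
  joinR : ∀ X Y : C, Y ⟶ join X Y

/-- A stage of the construction. For `n` up to the current stage, `tasks n m` is
`toExt (X n) m` pushed forward to the current object by amalgamation. -/
structure State (C : Type u) [Category.{v} C] where
  obj : C
  tasks : ℕ → ℕ → Σ B : C, obj ⟶ B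

variable {C : Type u} [Category.{v} C] (D : Data C)

namespace Data

/-- Tasks of stages `≤ k` are pushed along `φ`; stage `k + 1` receives the family `toExt X`
of the new object. -/
def advance (s : State C) {X : C} (φ : s.obj ⟶ X) (k : ℕ) : State C where
  obj := X
  tasks n m :=
    if n ≤ k then ⟨D.amalg φ (s.tasks n m).2, D.amalgL φ (s.tasks n m).2⟩
    else ⟨D.ext X m, D.toExt X m⟩

/-- Step `k` resolves the task indexed by `Nat.unpair k` and joins in `cofinal k`. -/
def stepMap (k : ℕ) (s : State C) :
    s.obj ⟶ D.join (s.tasks k.unpair.1 k.unpair.2).1 (D.cofinal k) :=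
  (s.tasks k.unpair.1 k.unpair.2).2 ≫ D.joinL _ _

def state : ℕ → State C
  | 0 => ⟨D.cofinal 0, fun _ m => ⟨D.ext _ m, D.toExt _ m⟩⟩
  | k + 1 => D.advance (state k) (D.stepMap k (state k)) k

def indObject : IndObject C where
  obj n := (D.state n).obj
  map k := D.stepMap k (D.state k)

lemma universal (hU : ∀ Y : C, ∃ n : ℕ, Nonempty (Y ⟶ D.cofinal n)) :
    D.indObject.Universal := by
  intro Y
  obtain ⟨n, ⟨g⟩⟩ := hU Y
  exact ⟨n + 1, ⟨g ≫ D.joinR _ _⟩⟩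

lemma exists_comp_advance_tasks {s : State C} {X : C} (φ : s.obj ⟶ X) {n m k : ℕ} (hn : n ≤ k)
    {Y B : C} {u : Y ⟶ B} {ψ : Y ⟶ s.obj} (δ : B ⟶ (s.tasks n m).1)
    (hδ : u ≫ δ = ψ ≫ (s.tasks n m).2) :
    ∃ δ' : B ⟶ ((D.advance s φ k).tasks n m).1,
      u ≫ δ' = (ψ ≫ φ) ≫ ((D.advance s φ k).tasks n m).2 := by
  dsimp only [advance]
  rw [if_pos hn]
  refine ⟨δ ≫ D.amalgR φ _, ?_⟩
  rw [reassoc_of% hδ, ← D.amalg_comm, Category.assoc]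

lemma state_tasks_self (n m : ℕ) :
    (D.state n).tasks n m = ⟨D.ext (D.indObject.obj n) m, D.toExt (D.indObject.obj n) m⟩ := by
  cases n with
  | zero => rfl
  | succ k => exact if_neg (by omega)

lemma exists_toExt_comp_eq (n m : ℕ) {k : ℕ} (h : n ≤ k) :
    ∃ δ : D.ext (D.indObject.obj n) m ⟶ ((D.state k).tasks n m).1,
      D.toExt _ m ≫ δ = D.indObject.trans h ≫ ((D.state k).tasks n m).2 := by
  induction k, h using Nat.le_induction with
  | base =>
    rw [state_tasks_self, IndObject.trans_refl]
    exact ⟨𝟙 _, by simp⟩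
  | succ k hk ih =>
    obtain ⟨δ, hδ⟩ := ih
    rw [IndObject.trans_succ _ hk]
    exact D.exists_comp_advance_tasks _ hk δ hδ

lemma absorbs_toExt (n m : ℕ) : D.indObject.Absorbs (D.toExt (D.indObject.obj n) m) := by
  suffices ∀ k : ℕ, D.indObject.Absorbs (D.toExt (D.indObject.obj k.unpair.1) k.unpair.2) by
    have hnm := this (Nat.pair n m)
    rwa [Nat.unpair_pair] at hnm
  intro k
  obtain ⟨δ, hδ⟩ := D.exists_toExt_comp_eq k.unpair.1 k.unpair.2 (Nat.unpair_left_le k)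
  refine ⟨k + 1, (Nat.unpair_left_le k).trans k.le_succ, δ ≫ D.joinL _ (D.cofinal k), ?_⟩
  rw [IndObject.trans_succ _ (Nat.unpair_left_le k)]
  exact ((reassoc_of% hδ) _).trans (Category.assoc _ _ _)

end Data

end Fraisse

theorem stmt_16_general (C : Type u) [Category.{v} C]
    (hCC : ∃ X : ℕ → C, ∀ Y : C, ∃ n : ℕ, Nonempty (Y ⟶ X n))
    (hRCC : ∀ X : C, ∃ (Y : ℕ → C) (f : ∀ m : ℕ, X ⟶ Y m),
      ∀ (Z : C) (β : X ⟶ Z), ∃ (m : ℕ) (γ : Z ⟶ Y m), β ≫ γ = f m)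
    (hJEP : ∀ X Y : C, ∃ Z : C, Nonempty (X ⟶ Z) ∧ Nonempty (Y ⟶ Z))
    (hAP : ∀ ⦃W X Y : C⦄ (f : W ⟶ X) (g : W ⟶ Y),
      ∃ (Z : C) (h : X ⟶ Z) (i : Y ⟶ Z), f ≫ h = g ≫ i) :
    ∃ Ω : IndObject C, Ω.Universal ∧ Ω.FInjective := by
  obtain ⟨U, hU⟩ := hCC
  choose E e he using hRCC
  choose A l r hlr using id hAP
  choose J hJl hJr using hJEP
  let D : Fraisse.Data C :=
    ⟨U, E, e, @A, @l, @r, @hlr, J, fun X Y => (hJl X Y).some, fun X Y => (hJr X Y).some⟩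
  refine ⟨D.indObject, D.universal hU, IndObject.fInjective_of_forall_absorbs hAP ?_⟩
  intro n Y f
  obtain ⟨m, g, hfg⟩ := he _ Y f
  have hfg_absorbed : D.indObject.Absorbs (f ≫ g) := by
    rw [hfg]
    exact D.absorbs_toExt n m
  exact hfg_absorbed.of_comp

/-- categorical Fraïssé theorem: a category with all morphisms monic
satisfying countable cofinality, relative countable cofinality, the joint embedding
property and the amalgamation property has an ind-object that is both universal and
f-injective (hence universal and homogeneous). -/
theorem stmt_16 (C : Type u) [Category.{v} C]
    (hmono : ∀ {X Y : C} (f : X ⟶ Y), Mono f)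
    (hCC : ∃ X : ℕ → C, ∀ Y : C, ∃ n : ℕ, Nonempty (Y ⟶ X n))
    (hRCC : ∀ X : C, ∃ (Y : ℕ → C) (f : ∀ m : ℕ, X ⟶ Y m),
      ∀ (Z : C) (β : X ⟶ Z), ∃ (m : ℕ) (γ : Z ⟶ Y m), β ≫ γ = f m)
    (hJEP : ∀ X Y : C, ∃ Z : C, Nonempty (X ⟶ Z) ∧ Nonempty (Y ⟶ Z))
    (hAP : ∀ ⦃W X Y : C⦄ (f : W ⟶ X) (g : W ⟶ Y),
      ∃ (Z : C) (h : X ⟶ Z) (i : Y ⟶ Z), f ≫ h = g ≫ i) :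
    ∃ Ω : IndObject C, Ω.Universal ∧ Ω.FInjective :=
  stmt_16_general C hCC hRCC hJEP hAP
end
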